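/- There is no real polynomial p in one variable such that p(ω) = ω⁴/(1 + ω²) for all ω ∈ ℝ. -/
import Mathlib

/-- There is no real polynomial `p` in one variable with
`p(ω) = ω⁴/(1 + ω²)` for all `ω ∈ ℝ`. -/
theorem no_polynomial_lower_bound :
    ¬ ∃ p : Polynomial ℝ, ∀ ω : ℝ, Polynomial.eval ω p = ω ^ 4 / (1 + ω ^ 2) := by
  rintro ⟨p, hp⟩
  have h : p * (1 + Polynomial.X ^ 2) = Polynomial.X ^ 4 := by
    apply Polynomial.funext
    intro x
    have hx : (1 : ℝ) + x ^ 2 ≠ 0 := by positivity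
    simp only [Polynomial.eval_mul, Polynomial.eval_add, Polynomial.eval_one,
      Polynomial.eval_pow, Polynomial.eval_X, hp x]
    field_simp
  have h2 := congrArg (fun q => Polynomial.eval Complex.I (q.map (algebraMap ℝ ℂ))) h
  simp [Polynomial.eval_map, Complex.I_sq] at h2
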